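/- arXiv:2409.00907 — 3 statements merged into one kernel-verified Lean document; each statement's English description precedes it below -/
import Mathlib

section
/- For every n ≥ 2, there exists a triangulated n-sphere with 2n + 4 vertices and exactly (n+1)(n+2) facets admitting a simplicial degree n+1 map to S^n_{n+2}. -/
open Finset

/-- An abstract simplicial complex on vertex type `V`: a collection of nonempty
finite sets of vertices closed under taking nonempty subsets. -/
structure AbsCx (V : Type*) where
  faces : Set (Finset V)
  down_closed : ∀ ⦃s t : Finset V⦄, s ∈ faces → t ⊆ s → t.Nonempty → t ∈ faces
  nonempty_of_mem : ∀ ⦃s⦄, s ∈ faces → s.Nonempty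

namespace AbsCx

variable {V W : Type*}

/-- The vertices of a complex. -/
def vertexSet (K : AbsCx V) : Set V := {v | {v} ∈ K.faces}

/-- The `n`-dimensional faces (given by `n+1` vertices). -/
def facetsOfDim (K : AbsCx V) (n : ℕ) : Set (Finset V) :=
  {s | s ∈ K.faces ∧ s.card = n + 1}

/-- A simplicial map sends faces to faces. -/
def IsSimplicialMap [DecidableEq W] (K : AbsCx V) (L : AbsCx W) (f : V → W) : Prop :=
  ∀ s ∈ K.faces, s.image f ∈ L.faces

/-- Geometric realization of an abstract simplicial complex, as a subspace of `V → ℝ`. -/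
def realization (K : AbsCx V) : Set (V → ℝ) :=
  {g | (∀ v, 0 ≤ g v) ∧ ∃ s ∈ K.faces, (∀ v, v ∉ s → g v = 0) ∧ ∑ v ∈ s, g v = 1}

/-- `K` is a triangulation of the `n`-sphere. -/
def IsSphereTriangulation (n : ℕ) (K : AbsCx V) : Prop :=
  Nonempty (K.realization ≃ₜ Metric.sphere (0 : EuclideanSpace ℝ (Fin (n+1))) 1)

/-- `K` is a triangulation of the closed `n`-disc. -/
def IsDiscTriangulation (n : ℕ) (K : AbsCx V) : Prop :=
  Nonempty (K.realization ≃ₜ Metric.closedBall (0 : EuclideanSpace ℝ (Fin n)) 1)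

/-- `K` triangulates a closed (compact, boundaryless = locally Euclidean) topological
`n`-manifold. -/
def IsClosedManifoldTriangulation (n : ℕ) (K : AbsCx V) : Prop :=
  ∃ (M : Type) (ts : TopologicalSpace M),
    @CompactSpace M ts ∧ Nonempty (@ChartedSpace (EuclideanSpace ℝ (Fin n)) _ M ts) ∧
      Nonempty (@Homeomorph (K.realization) M _ ts)

/-- A coherent orientation of the `n`-dimensional faces of `K`: a sign function on
ordered `(n+1)`-tuples of vertices, alternating under permutations, equal to `±1`
exactly on the orderings of `n`-faces, and such that two facets sharing an
`(n-1)`-face (i.e. orderings differing in exactly one coordinate) get opposite signs. -/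
structure CoherentOrientation [DecidableEq V] (n : ℕ) (K : AbsCx V) where
  sign : (Fin (n+1) → V) → ℤ
  sign_perm : ∀ (x : Fin (n+1) → V) (σ : Equiv.Perm (Fin (n+1))),
    sign (x ∘ σ) = (Equiv.Perm.sign σ : ℤ) * sign x
  sign_unit : ∀ x : Fin (n+1) → V, Function.Injective x →
    Finset.image x Finset.univ ∈ K.faces → sign x = 1 ∨ sign x = -1
  sign_zero : ∀ x : Fin (n+1) → V,
    ¬ Function.Injective x ∨ Finset.image x Finset.univ ∉ K.faces → sign x = 0
  coherent : ∀ x y : Fin (n+1) → V,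
    (∃ i, x i ≠ y i ∧ ∀ j, j ≠ i → x j = y j) →
    sign x ≠ 0 → sign y ≠ 0 → sign y = - sign x

open scoped Classical in
/-- The algebraic number of preimages of the ordered simplex `y` under `f`. -/
noncomputable def algSum [Fintype V] {n : ℕ}
    (sgn : (Fin (n+1) → V) → ℤ) (f : V → W) (y : Fin (n+1) → W) : ℤ :=
  ∑ x : Fin (n+1) → V, if f ∘ x = y then sgn x else 0

/-- `f` has degree `d`: the algebraic number of preimages of every positively
oriented facet of the target equals `d`. -/
def HasDegree [Fintype V] [DecidableEq V] [DecidableEq W] {n : ℕ}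
    {K : AbsCx V} {L : AbsCx W}
    (oK : CoherentOrientation n K) (oL : CoherentOrientation n L)
    (f : V → W) (d : ℤ) : Prop :=
  ∀ y : Fin (n+1) → W, oL.sign y = 1 → algSum oK.sign f y = d

/-- The standard `n`-sphere `S^n_{n+2}`: the boundary complex of the `(n+1)`-simplex,
i.e. all proper nonempty subsets of `n+2` vertices. -/
def stdSphere (n : ℕ) : AbsCx (Fin (n+2)) where
  faces := {s | s.Nonempty ∧ s ≠ Finset.univ}
  down_closed := fun {s t} hs hts ht =>
    ⟨ht, fun h => hs.2 (Finset.univ_subset_iff.mp (h ▸ hts))⟩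
  nonempty_of_mem := fun {s} hs => hs.1

/-- Boundary edges of a 2-dimensional complex: edges lying in exactly one triangle. -/
def boundaryEdges (K : AbsCx V) : Set (Finset V) :=
  {e | e ∈ K.faces ∧ e.card = 2 ∧ Set.ncard {s | s ∈ K.faces ∧ s.card = 3 ∧ e ⊆ s} = 1}

end AbsCx

open AbsCx

/-!
The complex is obtained from the boundary of the `(n+1)`-simplex on `u_1, …, u_{n+2}` by
stellar subdivisions of facets: first `u_1 ⋯ u_{n+1}` with `u'_{n+2}`, then each resulting facet
`u'_{n+2} * ∂ᵢΔ` with `u'ᵢ`. A stellar subdivision does not change the realization up to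
homeomorphism, and the boundary of a simplex is a sphere, so the complex is a sphere.

The map `u_k, u'_k ↦ u_k` is injective on every facet, and exactly `n + 1` facets lie over each
facet of `S^n_{n+2}`. Adjacent facets never differ by exchanging `u_k` and `u'_k`, so pulling back
the orientation of `S^n_{n+2}` gives a coherent orientation in which all `n + 1` preimages of a
facet count positively.
-/

theorem Function.apply_notMem_range_of_forall_ne_eq {ι α : Type*} {x y : ι → α} {i : ι}
    (hy : Function.Injective y) (hne : x i ≠ y i) (h : ∀ j, j ≠ i → x j = y j) :
    y i ∉ Set.range x := by
  rintro ⟨j, hj⟩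
  by_cases hji : j = i
  · exact hne (hji ▸ hj)
  · exact hji (hy (by rw [← h j hji, hj]))

theorem Finset.image_update_of_injective {ι α : Type*} [DecidableEq ι] [Fintype ι]
    [DecidableEq α] {x : ι → α} (hx : Function.Injective x) (i : ι) (b : α) :
    univ.image (Function.update x i b) = insert b ((univ.image x).erase (x i)) := by
  ext v
  simp only [mem_image, mem_univ, true_and, mem_insert, mem_erase, Function.update_apply]
  constructor
  · rintro ⟨j, hj⟩
    split_ifs at hj with hji
    · exact Or.inl hj.symm
    · exact Or.inr ⟨hj ▸ fun h => hji (hx h), j, hj⟩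
  · rintro (rfl | ⟨hv, j, rfl⟩)
    · exact ⟨i, if_pos rfl⟩
    · exact ⟨j, if_neg fun h => hv (by rw [h])⟩

section CornerSimplex

variable {n : ℕ}

def cornerSimplex (n : ℕ) : Set (EuclideanSpace ℝ (Fin (n + 1))) :=
  {x | (∀ k, 0 ≤ x k) ∧ ∑ k, x k ≤ 1}

theorem convex_cornerSimplex : Convex ℝ (cornerSimplex n) := by
  rintro x ⟨hx0, hx1⟩ y ⟨hy0, hy1⟩ a b ha hb hab
  refine ⟨fun k => ?_, ?_⟩
  · simpa using add_nonneg (mul_nonneg ha (hx0 k)) (mul_nonneg hb (hy0 k))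
  · simp only [PiLp.add_apply, PiLp.smul_apply, smul_eq_mul, sum_add_distrib, ← mul_sum]
    nlinarith

theorem cornerSimplex_subset_closedBall : cornerSimplex n ⊆ Metric.closedBall 0 1 := by
  rintro x ⟨hx0, hx1⟩
  have hx1' : ∀ k, x k ≤ 1 := fun k =>
    (single_le_sum (fun j _ => hx0 j) (mem_univ k)).trans hx1
  rw [mem_closedBall_zero_iff, EuclideanSpace.norm_eq, Real.sqrt_le_one]
  calc ∑ k, ‖x k‖ ^ 2 ≤ ∑ k, x k := sum_le_sum fun k _ => by
          rw [Real.norm_of_nonneg (hx0 k), sq]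
          exact mul_le_of_le_one_left (hx0 k) (hx1' k)
    _ ≤ 1 := hx1

theorem cornerSimplex_eq_preimage : cornerSimplex n =
    (⋂ k, EuclideanSpace.proj k ⁻¹' Set.Ici 0) ∩
      ⇑(∑ k, EuclideanSpace.proj k : EuclideanSpace ℝ (Fin (n + 1)) →L[ℝ] ℝ) ⁻¹' Set.Iic 1 := by
  ext x
  simp [cornerSimplex]

theorem isClosed_cornerSimplex : IsClosed (cornerSimplex n) := by
  rw [cornerSimplex_eq_preimage]
  exact (isClosed_iInter fun k => isClosed_Ici.preimage (EuclideanSpace.proj k).continuous).inter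
    (isClosed_Iic.preimage (ContinuousLinearMap.continuous _))

theorem interior_cornerSimplex :
    interior (cornerSimplex n) = {x | (∀ k, 0 < x k) ∧ ∑ k, x k < 1} := by
  have interior_preimage : ∀ ℓ : EuclideanSpace ℝ (Fin (n + 1)) →L[ℝ] ℝ,
      Function.Surjective ℓ → ∀ s, interior (ℓ ⁻¹' s) = ℓ ⁻¹' interior s := fun ℓ hℓ s =>
    ((ℓ.isOpenMap hℓ).preimage_interior_eq_interior_preimage ℓ.continuous s).symm
  have hproj : ∀ k : Fin (n + 1), interior (EuclideanSpace.proj k ⁻¹' Set.Ici (0 : ℝ)) =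
      EuclideanSpace.proj k ⁻¹' Set.Ioi 0 := fun k => by
    rw [interior_preimage _ (fun t => ⟨EuclideanSpace.single k t, by simp⟩), interior_Ici]
  rw [cornerSimplex_eq_preimage, interior_inter, interior_iInter_of_finite,
    interior_preimage _ (fun t => ⟨EuclideanSpace.single 0 t, by simp⟩)]
  simp_rw [hproj, interior_Iic]
  ext x
  simp

theorem frontier_cornerSimplex : frontier (cornerSimplex n) =
    {x | x ∈ cornerSimplex n ∧ ((∃ k, x k = 0) ∨ ∑ k, x k = 1)} := by
  ext x
  rw [frontier, isClosed_cornerSimplex.closure_eq, interior_cornerSimplex]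
  constructor
  · rintro ⟨hx, hint⟩
    refine ⟨hx, ?_⟩
    by_contra! h
    exact hint ⟨fun k => (hx.1 k).lt_of_ne' (h.1 k), hx.2.lt_of_ne h.2⟩
  · rintro ⟨hx, h | h⟩
    · obtain ⟨k, hk⟩ := h
      exact ⟨hx, fun hint => (hint.1 k).ne' hk⟩
    · exact ⟨hx, fun hint => hint.2.ne h⟩

theorem nonempty_homeomorph_frontier_cornerSimplex :
    Nonempty (frontier (cornerSimplex n) ≃ₜ
      Metric.sphere (0 : EuclideanSpace ℝ (Fin (n + 1))) 1) := by
  have hint : (interior (cornerSimplex n)).Nonempty := by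
    refine ⟨WithLp.toLp 2 fun _ => ((n : ℝ) + 2)⁻¹, ?_⟩
    rw [interior_cornerSimplex]
    refine ⟨fun k => by simp only [inv_pos]; positivity, ?_⟩
    simp only [sum_const, card_univ, Fintype.card_fin, nsmul_eq_mul]
    push_cast
    rw [← div_eq_mul_inv, div_lt_one (by positivity)]
    linarith
  obtain ⟨e, -, -, he⟩ := exists_homeomorph_image_eq convex_cornerSimplex hint
    ((NormedSpace.isVonNBounded_closedBall ℝ _ 1).subset cornerSimplex_subset_closedBall)
    (convex_closedBall 0 1) (by simp [interior_closedBall])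
    (NormedSpace.isVonNBounded_closedBall ℝ _ 1)
  rw [frontier_closedBall 0 one_ne_zero] at he
  exact ⟨(e.image _).trans (Homeomorph.setCongr he)⟩

end CornerSimplex

namespace AbsCx

variable {V : Type*}

def ofFacets (F : Finset (Finset V)) : AbsCx V where
  faces := {s | s.Nonempty ∧ ∃ T ∈ F, s ⊆ T}
  down_closed := fun _ _ ⟨_, T, hT, hsT⟩ hts ht => ⟨ht, T, hT, hts.trans hsT⟩
  nonempty_of_mem := fun _ h => h.1

variable {F : Finset (Finset V)}

theorem mem_realization_ofFacets {g : V → ℝ} :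
    g ∈ (ofFacets F).realization ↔
      (∀ v, 0 ≤ g v) ∧ ∃ T ∈ F, (∀ v ∉ T, g v = 0) ∧ ∑ v ∈ T, g v = 1 := by
  constructor
  · rintro ⟨h0, s, ⟨-, T, hT, hsT⟩, hz, hsum⟩
    refine ⟨h0, T, hT, fun v hv => hz v fun hvs => hv (hsT hvs), ?_⟩
    rwa [← sum_subset hsT fun v _ hv => hz v hv]
  · rintro ⟨h0, T, hT, hz, hsum⟩
    refine ⟨h0, T, ⟨?_, T, hT, subset_rfl⟩, hz, hsum⟩
    by_contra hT0
    simp [not_nonempty_iff_eq_empty.mp hT0] at hsum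

theorem mem_of_mem_ofFacets_faces {k : ℕ} (hF : ∀ T ∈ F, T.card = k) {s : Finset V}
    (hs : s ∈ (ofFacets F).faces) (hk : k ≤ s.card) : s ∈ F := by
  obtain ⟨-, T, hT, hsT⟩ := hs
  rwa [eq_of_subset_of_card_le hsT (hF T hT ▸ hk)]

theorem facetsOfDim_ofFacets {n : ℕ} (hF : ∀ T ∈ F, T.card = n + 1) :
    (ofFacets F).facetsOfDim n = F := by
  ext s
  refine ⟨fun ⟨hs, hc⟩ => mem_of_mem_ofFacets_faces hF hs hc.ge, fun hs => ?_⟩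
  exact ⟨⟨card_pos.mp (by rw [hF s hs]; omega), s, hs, subset_rfl⟩, hF s hs⟩

theorem isCompact_realization [Fintype V] (K : AbsCx V) : IsCompact K.realization := by
  have hK : K.realization = ⋃ s ∈ K.faces, stdSimplex ℝ V ∩ {g | ∀ v ∉ s, g v = 0} := by
    ext g
    simp only [realization, Set.mem_iUnion, Set.mem_inter_iff, Set.mem_ofPred_eq, stdSimplex,
      exists_prop]
    constructor
    · rintro ⟨h0, s, hs, hz, hsum⟩
      exact ⟨s, hs, ⟨h0, by rwa [← sum_subset (subset_univ s) fun v _ hv => hz v hv]⟩, hz⟩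
    · rintro ⟨s, hs, ⟨h0, hsum⟩, hz⟩
      exact ⟨h0, s, hs, hz, by rwa [← sum_subset (subset_univ s) fun v _ hv => hz v hv] at hsum⟩
  rw [hK]
  refine (Set.toFinite K.faces).isCompact_biUnion fun s _ =>
    (isCompact_stdSimplex ℝ V).inter_right ?_
  simp only [Set.ofPred_forall]
  exact isClosed_iInter fun v => isClosed_iInter fun _ =>
    isClosed_eq (continuous_apply v) continuous_const

section Stellar

variable [DecidableEq V]

def stellarFacets (F : Finset (Finset V)) (S : Finset V) (w : V) : Finset (Finset V) :=
  F.erase S ∪ S.image fun u => insert w (S.erase u)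

variable {S : Finset V} {w : V}

theorem mem_stellarFacets {T : Finset V} :
    T ∈ stellarFacets F S w ↔ (T ∈ F ∧ T ≠ S) ∨ ∃ u ∈ S, T = insert w (S.erase u) := by
  simp only [stellarFacets, mem_union, mem_erase, mem_image, and_comm, eq_comm]

/-- Sends `w` to the barycentre of `S`; this is the piecewise linear homeomorphism
underlying the subdivision. -/
noncomputable def stellarCollapse (S : Finset V) (w : V) (g : V → ℝ) : V → ℝ :=
  fun v => if v = w then 0 else g v + if v ∈ S then g w / S.card else 0

/-- Inverse of `stellarCollapse`: on the subdivided complex some vertex of `S` has weight `0`,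
so the weight of `w` is recovered as `#S` times the least weight on `S`. -/
noncomputable def stellarExpand (S : Finset V) (w : V) (hS : S.Nonempty) (p : V → ℝ) :
    V → ℝ :=
  fun v => if v = w then S.card * S.inf' hS p else if v ∈ S then p v - S.inf' hS p else p v

theorem continuous_stellarCollapse : Continuous (stellarCollapse S w) := by
  refine continuous_pi fun v => ?_
  unfold stellarCollapse
  split_ifs
  · exact continuous_const
  · exact (continuous_apply v).add ((continuous_apply w).div_const _)
  · simpa using continuous_apply v

variable (hw : ∀ T ∈ F, w ∉ T)
include hw

theorem stellarCollapse_mem_realization (hS : S ∈ F) {g : V → ℝ}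
    (hg : g ∈ (ofFacets (stellarFacets F S w)).realization) :
    stellarCollapse S w g ∈ (ofFacets F).realization := by
  have hwS : w ∉ S := hw S hS
  obtain ⟨h0, T, hT, hz, hsum⟩ := mem_realization_ofFacets.mp hg
  refine mem_realization_ofFacets.mpr ⟨fun v => ?_, ?_⟩
  · unfold stellarCollapse
    split_ifs
    · rfl
    · exact add_nonneg (h0 v) (div_nonneg (h0 w) (Nat.cast_nonneg _))
    · simpa using h0 v
  rcases mem_stellarFacets.mp hT with ⟨hTF, -⟩ | ⟨u, huS, rfl⟩
  · have hgw : g w = 0 := hz w (hw T hTF)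
    have hid : stellarCollapse S w g = g := funext fun v => by
      unfold stellarCollapse; split_ifs <;> simp_all
    rw [hid]
    exact ⟨T, hTF, hz, hsum⟩
  · have hwu : w ∉ S.erase u := fun h => hwS (mem_of_mem_erase h)
    have hgu : g u = 0 := hz u (by simp [ne_of_mem_of_not_mem huS hwS])
    have hsumS : ∑ v ∈ S, g v = 1 - g w := by
      rw [sum_insert hwu] at hsum
      rw [← sum_erase_add _ _ huS, hgu]
      linarith
    refine ⟨S, hS, fun v hvS => ?_, ?_⟩
    · have hvu : v ∉ S.erase u := fun h => hvS (mem_of_mem_erase h)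
      unfold stellarCollapse
      split_ifs with hvw
      · rfl
      · simpa using hz v (by simp [hvw, hvu])
    · have hS' : ∀ v ∈ S, stellarCollapse S w g v = g v + g w / S.card := fun v hv => by
        simp [stellarCollapse, hv, ne_of_mem_of_not_mem hv hwS]
      have hcard : (S.card : ℝ) ≠ 0 := by exact_mod_cast (card_pos.mpr ⟨u, huS⟩).ne'
      rw [sum_congr rfl hS', sum_add_distrib, sum_const, hsumS, nsmul_eq_mul]
      field_simp
      ring

variable (hSmax : ∀ T ∈ F, S ⊆ T → T = S) (hSne : S.Nonempty)
include hSmax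

theorem exists_eq_zero_of_mem_realization_stellar (hS : S ∈ F) {g : V → ℝ}
    (hg : g ∈ (ofFacets (stellarFacets F S w)).realization) : ∃ u ∈ S, g u = 0 := by
  obtain ⟨-, T, hT, hz, -⟩ := mem_realization_ofFacets.mp hg
  rcases mem_stellarFacets.mp hT with ⟨hTF, hTS⟩ | ⟨u, huS, rfl⟩
  · obtain ⟨u, huS, huT⟩ := not_subset.mp fun hST => hTS (hSmax T hTF hST)
    exact ⟨u, huS, hz u huT⟩
  · exact ⟨u, huS, hz u (by simp [ne_of_mem_of_not_mem huS (hw S hS)])⟩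

include hSne in
theorem stellarExpand_mem_realization {p : V → ℝ} (hp : p ∈ (ofFacets F).realization) :
    stellarExpand S w hSne p ∈ (ofFacets (stellarFacets F S w)).realization := by
  obtain ⟨h0, T, hT, hz, hsum⟩ := mem_realization_ofFacets.mp hp
  have hm0 : 0 ≤ S.inf' hSne p := le_inf' _ _ fun v _ => h0 v
  refine mem_realization_ofFacets.mpr ⟨fun v => ?_, ?_⟩
  · unfold stellarExpand
    split_ifs with _ hvS
    · positivity
    · linarith [inf'_le p hvS]
    · exact h0 v
  by_cases hTS : T = S
  · subst hTS
    obtain ⟨u, huT, hum⟩ := exists_mem_eq_inf' hSne p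
    have hwT : w ∉ T := hw T hT
    refine ⟨insert w (T.erase u), mem_stellarFacets.mpr (Or.inr ⟨u, huT, rfl⟩), fun v hv => ?_, ?_⟩
    · have hvw : v ≠ w := fun h => hv (h ▸ mem_insert_self _ _)
      have hvu : v ∈ T → v = u := fun hvT => by_contra fun h => hv (by simp [h, hvT])
      rw [stellarExpand, if_neg hvw]
      split_ifs with hvT
      · rw [hvu hvT, hum, sub_self]
      · exact hz v hvT
    · have hwu : w ∉ T.erase u := fun h => hwT (mem_of_mem_erase h)
      have hT' : ∀ v ∈ T.erase u, stellarExpand T w hSne p v = p v - T.inf' hSne p :=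
        fun v hv => by
          simp [stellarExpand, mem_of_mem_erase hv, ne_of_mem_of_not_mem (mem_of_mem_erase hv) hwT]
      have hw' : stellarExpand T w hSne p w = T.card * p u := by simp [stellarExpand, hum]
      rw [sum_insert hwu, sum_congr rfl hT', sum_sub_distrib, sum_const, card_erase_of_mem huT,
        sum_erase_eq_sub huT, hsum, hw', hum, nsmul_eq_mul,
        Nat.cast_sub (card_pos.mpr ⟨u, huT⟩)]
      push_cast
      ring
  · obtain ⟨u, huS, huT⟩ := not_subset.mp fun hST => hTS (hSmax T hT hST)
    have hinf : S.inf' hSne p = 0 :=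
      le_antisymm (hz u huT ▸ inf'_le p huS) hm0
    have hid : stellarExpand S w hSne p = p := funext fun v => by
      unfold stellarExpand
      split_ifs with hvw <;> simp [hinf, hvw, hz w (hw T hT)]
    rw [hid]
    exact ⟨T, mem_stellarFacets.mpr (Or.inl ⟨hT, hTS⟩), hz, hsum⟩

include hSne in
theorem stellarExpand_collapse (hS : S ∈ F) {g : V → ℝ}
    (hg : g ∈ (ofFacets (stellarFacets F S w)).realization) :
    stellarExpand S w hSne (stellarCollapse S w g) = g := by
  have hwS : w ∉ S := hw S hS
  have hS' : ∀ v ∈ S, stellarCollapse S w g v = g v + g w / S.card := fun v hv => by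
    simp [stellarCollapse, hv, ne_of_mem_of_not_mem hv hwS]
  obtain ⟨u, huS, hgu⟩ := exists_eq_zero_of_mem_realization_stellar hw hSmax hS hg
  have hinf : S.inf' hSne (stellarCollapse S w g) = g w / S.card := by
    refine le_antisymm ?_ (le_inf' _ _ fun v hv => ?_)
    · exact (inf'_le _ huS).trans_eq (by rw [hS' u huS, hgu, zero_add])
    · rw [hS' v hv]
      linarith [(mem_realization_ofFacets.mp hg).1 v]
  have hcard : (S.card : ℝ) ≠ 0 := by exact_mod_cast hSne.card_pos.ne'
  funext v
  rw [stellarExpand, hinf]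
  split_ifs with hvw hvS
  · rw [hvw]
    field_simp
  · rw [hS' v hvS]
    ring
  · simp [stellarCollapse, hvw, hvS]

omit hSmax in
include hSne in
theorem stellarCollapse_expand {p : V → ℝ} (hp : p ∈ (ofFacets F).realization) :
    stellarCollapse S w (stellarExpand S w hSne p) = p := by
  obtain ⟨-, T, hT, hz, -⟩ := mem_realization_ofFacets.mp hp
  have hcard : (S.card : ℝ) ≠ 0 := by exact_mod_cast hSne.card_pos.ne'
  funext v
  simp only [stellarCollapse, stellarExpand]
  split_ifs with hvw hvS
  · rw [hvw, hz w (hw T hT)]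
  · field_simp
    ring
  · ring

include hSne in
theorem nonempty_homeomorph_realization_stellarFacets [Fintype V] (hS : S ∈ F) :
    Nonempty ((ofFacets (stellarFacets F S w)).realization ≃ₜ (ofFacets F).realization) :=
  have := isCompact_iff_compactSpace.mp (isCompact_realization (ofFacets (stellarFacets F S w)))
  ⟨Continuous.homeoOfEquivCompactToT2 (f :=
    { toFun := fun g => ⟨stellarCollapse S w g, stellarCollapse_mem_realization hw hS g.2⟩
      invFun := fun p => ⟨stellarExpand S w hSne p, stellarExpand_mem_realization hw hSmax hSne p.2⟩
      left_inv := fun g => Subtype.ext (stellarExpand_collapse hw hSmax hSne hS g.2)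
      right_inv := fun p => Subtype.ext (stellarCollapse_expand hw hSne p.2) })
    ((continuous_stellarCollapse.comp continuous_subtype_val).subtype_mk _)⟩

end Stellar

section SimplexBoundary

variable {V : Type*} {n : ℕ}

def simplexCoords (e : Fin (n + 2) ↪ V) (g : V → ℝ) : EuclideanSpace ℝ (Fin (n + 1)) :=
  WithLp.toLp 2 fun k => g (e k.castSucc)

noncomputable def simplexPoint (e : Fin (n + 2) ↪ V) (x : EuclideanSpace ℝ (Fin (n + 1))) : V → ℝ :=
  Function.extend e (Fin.snoc (α := fun _ => ℝ) x.ofLp (1 - ∑ k, x k)) 0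

variable {e : Fin (n + 2) ↪ V}

theorem simplexPoint_apply (x : EuclideanSpace ℝ (Fin (n + 1))) (i : Fin (n + 2)) :
    simplexPoint e x (e i) = Fin.snoc (α := fun _ => ℝ) x.ofLp (1 - ∑ k, x k) i :=
  e.injective.extend_apply _ _ i

theorem simplexCoords_simplexPoint (x : EuclideanSpace ℝ (Fin (n + 1))) :
    simplexCoords e (simplexPoint e x) = x := by
  ext k
  simp [simplexCoords, simplexPoint_apply]

variable [DecidableEq V]

def simplexBoundaryFacets (e : Fin (n + 2) ↪ V) : Finset (Finset V) :=
  univ.image fun i => (univ.erase i).map e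

theorem mem_realization_simplexBoundary {g : V → ℝ} :
    g ∈ (ofFacets (simplexBoundaryFacets e)).realization ↔ (∀ v, 0 ≤ g v) ∧
      (∀ v ∉ Set.range e, g v = 0) ∧ ∑ i, g (e i) = 1 ∧ ∃ i, g (e i) = 0 := by
  simp only [mem_realization_ofFacets, simplexBoundaryFacets, mem_image, mem_univ, true_and,
    exists_exists_eq_and, sum_map, mem_map, mem_erase, and_true, not_exists, not_and]
  refine and_congr_right fun _ => ⟨fun ⟨i, hz, hsum⟩ => ?_, fun ⟨hz, hsum, i, hi⟩ => ?_⟩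
  · have hi : g (e i) = 0 := hz _ fun j hj => by simp_all
    refine ⟨fun v hv => hz v fun j _ h => hv ⟨j, h⟩, ?_, i, hi⟩
    rw [← add_sum_erase _ _ (mem_univ i), hi, zero_add, hsum]
  · refine ⟨i, fun v hv => ?_, ?_⟩
    · by_cases hve : v ∈ Set.range e
      · obtain ⟨j, rfl⟩ := hve
        by_cases hji : j = i
        · rw [hji, hi]
        · exact absurd rfl (hv j hji)
      · exact hz v hve
    · rw [← add_sum_erase _ _ (mem_univ i), hi, zero_add] at hsum
      exact hsum

theorem simplexCoords_mem_frontier {g : V → ℝ}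
    (hg : g ∈ (ofFacets (simplexBoundaryFacets e)).realization) :
    simplexCoords e g ∈ frontier (cornerSimplex n) := by
  obtain ⟨h0, -, hsum, i, hi⟩ := mem_realization_simplexBoundary.mp hg
  rw [Fin.sum_univ_castSucc] at hsum
  refine frontier_cornerSimplex ▸ ⟨⟨fun k => h0 _, ?_⟩, ?_⟩
  · simp only [simplexCoords]
    linarith [h0 (e (Fin.last _))]
  · rcases Fin.eq_castSucc_or_eq_last i with ⟨k, rfl⟩ | rfl
    · exact Or.inl ⟨k, hi⟩
    · exact Or.inr (by simp only [simplexCoords]; linarith)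

theorem simplexPoint_mem_realization {x : EuclideanSpace ℝ (Fin (n + 1))}
    (hx : x ∈ frontier (cornerSimplex n)) :
    simplexPoint e x ∈ (ofFacets (simplexBoundaryFacets e)).realization := by
  rw [frontier_cornerSimplex] at hx
  obtain ⟨⟨h0, hle⟩, hzero⟩ := hx
  refine mem_realization_simplexBoundary.mpr ⟨fun v => ?_, fun v hv => ?_, ?_, ?_⟩
  · by_cases hv : v ∈ Set.range e
    · obtain ⟨i, rfl⟩ := hv
      rw [simplexPoint_apply]
      refine Fin.lastCases ?_ (fun k => ?_) i
      · simpa using hle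
      · simpa using h0 k
    · simp [simplexPoint, Function.extend_apply' _ _ _ hv]
  · simp [simplexPoint, Function.extend_apply' _ _ _ hv]
  · simp [simplexPoint_apply, Fin.sum_univ_castSucc]
  · rcases hzero with ⟨k, hk⟩ | hsum
    · exact ⟨k.castSucc, by simpa [simplexPoint_apply] using hk⟩
    · exact ⟨Fin.last _, by simp [simplexPoint_apply, hsum]⟩

theorem simplexPoint_simplexCoords {g : V → ℝ}
    (hg : g ∈ (ofFacets (simplexBoundaryFacets e)).realization) :
    simplexPoint e (simplexCoords e g) = g := by
  obtain ⟨-, hz, hsum, -⟩ := mem_realization_simplexBoundary.mp hg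
  rw [Fin.sum_univ_castSucc] at hsum
  funext v
  by_cases hv : v ∈ Set.range e
  · obtain ⟨i, rfl⟩ := hv
    rw [simplexPoint_apply]
    refine Fin.lastCases ?_ (fun k => ?_) i
    · simp only [Fin.snoc_last, simplexCoords]
      linarith
    · simp [simplexCoords]
  · simp [simplexPoint, Function.extend_apply' _ _ _ hv, hz v hv]

theorem nonempty_homeomorph_realization_simplexBoundary [Fintype V] :
    Nonempty ((ofFacets (simplexBoundaryFacets e)).realization ≃ₜ
      Metric.sphere (0 : EuclideanSpace ℝ (Fin (n + 1))) 1) := by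
  have := isCompact_iff_compactSpace.mp (isCompact_realization (ofFacets (simplexBoundaryFacets e)))
  have hcont : Continuous (simplexCoords (n := n) e) :=
    (PiLp.continuous_toLp 2 _).comp (continuous_pi fun k => continuous_apply _)
  obtain ⟨h⟩ := nonempty_homeomorph_frontier_cornerSimplex (n := n)
  exact ⟨(Continuous.homeoOfEquivCompactToT2 (f :=
    { toFun := fun g => ⟨simplexCoords e g, simplexCoords_mem_frontier g.2⟩
      invFun := fun x => ⟨simplexPoint e x, simplexPoint_mem_realization x.2⟩
      left_inv := fun g => Subtype.ext (simplexPoint_simplexCoords g.2)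
      right_inv := fun x => Subtype.ext (simplexCoords_simplexPoint x.1) })
    ((hcont.comp continuous_subtype_val).subtype_mk _)).trans h⟩

end SimplexBoundary

section Pullback

variable {V W : Type*} [DecidableEq V] [DecidableEq W] {n : ℕ} {K : AbsCx V} {L : AbsCx W}
  {f : V → W}

open scoped Classical in
noncomputable def CoherentOrientation.comap (oL : CoherentOrientation n L)
    (hf : K.IsSimplicialMap L f) (hinj : ∀ s ∈ K.faces, Set.InjOn f s)
    (hadj : ∀ s ∈ K.faces, s.card = n + 1 → ∀ a ∈ s, ∀ b ∉ s,
      insert b (s.erase a) ∈ K.faces → f b ≠ f a) :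
    CoherentOrientation n K where
  sign x := if univ.image x ∈ K.faces then oL.sign (f ∘ x) else 0
  sign_perm x σ := by
    rw [← image_image, image_univ_equiv, ← Function.comp_assoc, oL.sign_perm]
    split_ifs <;> simp
  sign_unit x hx hface := by
    rw [if_pos hface]
    refine oL.sign_unit _ (fun a b hab => hx (hinj _ hface ?_ ?_ hab)) ?_
    · exact mem_image_of_mem x (mem_univ a)
    · exact mem_image_of_mem x (mem_univ b)
    · simpa [image_image] using hf _ hface
  sign_zero x := by
    rintro (hx | hface)
    · split_ifs
      · exact oL.sign_zero _ (Or.inl fun h => hx h.of_comp)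
      · rfl
    · exact if_neg hface
  coherent x y := by
    rintro ⟨i, hne, hxy⟩ hx hy
    have hfx : univ.image x ∈ K.faces := by by_contra h; exact hx (if_neg h)
    have hfy : univ.image y ∈ K.faces := by by_contra h; exact hy (if_neg h)
    simp only [if_pos hfx, if_pos hfy] at hx hy ⊢
    have hinj_of_sign : ∀ z : Fin (n + 1) → V, oL.sign (f ∘ z) ≠ 0 → Function.Injective z :=
      fun z hz => by_contra fun h => hz (oL.sign_zero _ (Or.inl fun h' => h h'.of_comp))
    have hfne : f (y i) ≠ f (x i) := by
      refine hadj _ hfx ?_ _ (mem_image_of_mem x (mem_univ i)) _ ?_ ?_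
      · rw [card_image_of_injective _ (hinj_of_sign x hx), card_univ, Fintype.card_fin]
      · simpa using Function.apply_notMem_range_of_forall_ne_eq (hinj_of_sign y hy) hne hxy
      · rwa [← image_update_of_injective (hinj_of_sign x hx),
          ← Function.eq_update_iff.mpr ⟨rfl, fun j hj => (hxy j hj).symm⟩]
    exact oL.coherent _ _ ⟨i, fun h => hfne h.symm, fun j hj => congrArg f (hxy j hj)⟩ hx hy

variable (oL : CoherentOrientation n L) (hf : K.IsSimplicialMap L f)
  (hinj : ∀ s ∈ K.faces, Set.InjOn f s)
  (hadj : ∀ s ∈ K.faces, s.card = n + 1 → ∀ a ∈ s, ∀ b ∉ s,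
    insert b (s.erase a) ∈ K.faces → f b ≠ f a)

open scoped Classical in
theorem algSum_comap [Fintype V] (y : Fin (n + 1) → W) :
    algSum (oL.comap hf hinj hadj).sign f y =
      #{x : Fin (n + 1) → V | f ∘ x = y ∧ univ.image x ∈ K.faces} * oL.sign y := by
  rw [algSum, card_filter, Nat.cast_sum, sum_mul]
  refine sum_congr rfl fun x _ => ?_
  simp only [CoherentOrientation.comap]
  split_ifs with h1 h2 h3 <;> simp_all

include hinj in
open scoped Classical in
theorem card_lifts_eq_card_faces [Fintype V] (y : Fin (n + 1) → W) :
    #{x : Fin (n + 1) → V | f ∘ x = y ∧ univ.image x ∈ K.faces} =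
      #{T : Finset V | T ∈ K.faces ∧ T.image f = univ.image y} := by
  refine card_bij (fun x _ => univ.image x) (fun x hx => ?_) (fun x hx x' hx' hxx' => ?_)
    fun T hT => ?_
  · simp only [mem_filter, mem_univ, true_and] at hx ⊢
    rw [image_image, hx.1]
    exact ⟨hx.2, rfl⟩
  · simp only [mem_filter, mem_univ, true_and] at hx hx'
    funext i
    refine hinj _ hx.2 (mem_image_of_mem x (mem_univ i)) (hxx' ▸ mem_image_of_mem x' (mem_univ i))
      ?_
    rw [← Function.comp_apply (f := f), hx.1, ← Function.comp_apply (f := f), hx'.1]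
  · simp only [mem_filter, mem_univ, true_and] at hT ⊢
    obtain ⟨hTK, hTy⟩ := hT
    have hlift : ∀ i, ∃ t ∈ T, f t = y i := fun i => by
      have : y i ∈ T.image f := hTy ▸ mem_image_of_mem y (mem_univ i)
      simpa using this
    choose x hxT hfx using hlift
    have hfx' : f ∘ x = y := funext hfx
    have himage : univ.image x = T := by
      refine (image_subset_iff.mpr fun i _ => hxT i).antisymm fun t ht => ?_
      obtain ⟨i, -, hi⟩ := mem_image.mp (hTy ▸ mem_image_of_mem f ht)
      exact mem_image.mpr ⟨i, mem_univ i, hinj _ hTK (hxT i) ht (by rw [hfx, hi])⟩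
    exact ⟨x, ⟨hfx', himage ▸ hTK⟩, himage⟩

include hinj in
open scoped Classical in
theorem hasDegree_comap [Fintype V] {d : ℕ}
    (hcount : ∀ y : Fin (n + 1) → W, Function.Injective y → univ.image y ∈ L.faces →
      #{T : Finset V | T ∈ K.faces ∧ T.image f = univ.image y} = d) :
    HasDegree (oL.comap hf hinj hadj) oL f d := by
  intro y hy
  have hsign : Function.Injective y ∧ univ.image y ∈ L.faces := by
    by_contra h
    rw [not_and_or] at h
    simp [oL.sign_zero y h] at hy
  rw [algSum_comap, hy, mul_one, card_lifts_eq_card_faces hinj, hcount y hsign.1 hsign.2]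

end Pullback

section StdSphereOrientation

variable {n : ℕ}

/-- The vertices `e₀, …, eₙ, -(e₀ + ⋯ + eₙ)` of a simplex in `ℤⁿ⁺¹`: their only linear
relation is that they sum to zero, so any `n + 1` of them are linearly independent. -/
def simplexVertex (n : ℕ) (m : Fin (n + 2)) : Fin (n + 1) → ℤ :=
  fun k => (if m = k.castSucc then 1 else 0) - if m = Fin.last _ then 1 else 0

def stdSphereDet (y : Fin (n + 1) → Fin (n + 2)) : ℤ :=
  (Matrix.of fun i => simplexVertex n (y i)).det

theorem sum_simplexVertex : ∑ m, simplexVertex n m = 0 := by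
  ext k
  simp [simplexVertex, sum_sub_distrib]

theorem eq_of_sum_smul_simplexVertex_eq_zero {d : Fin (n + 2) → ℤ}
    (hd : ∑ m, d m • simplexVertex n m = 0) (m : Fin (n + 2)) : d m = d (Fin.last _) := by
  refine Fin.lastCases rfl (fun k => ?_) m
  have := congrFun hd k
  simp only [simplexVertex, Finset.sum_apply, Pi.smul_apply, smul_eq_mul, mul_sub, mul_ite,
    mul_one, mul_zero, sum_sub_distrib, sum_ite_eq', mem_univ, if_true] at this
  simpa [sub_eq_zero] using this

theorem exists_notMem_range (y : Fin (n + 1) → Fin (n + 2)) : ∃ m, m ∉ Set.range y := by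
  by_contra! hsurj
  have := Fintype.card_le_of_surjective y fun m => hsurj m
  simp at this

theorem exists_image_eq_erase {y : Fin (n + 1) → Fin (n + 2)} (hy : Function.Injective y) :
    ∃ m, univ.image y = univ.erase m := by
  obtain ⟨m, hm⟩ := exists_notMem_range y
  refine ⟨m, eq_of_subset_of_card_le (fun l hl => ?_) ?_⟩
  · obtain ⟨i, -, rfl⟩ := mem_image.mp hl
    exact mem_erase.mpr ⟨fun h => hm ⟨i, h⟩, mem_univ _⟩
  · simp [card_image_of_injective _ hy]

theorem stdSphereDet_ne_zero {y : Fin (n + 1) → Fin (n + 2)} (hy : Function.Injective y) :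
    stdSphereDet y ≠ 0 := by
  intro h
  obtain ⟨c, hc, hcM⟩ := Matrix.exists_vecMul_eq_zero_iff.mpr h
  let d : Fin (n + 2) → ℤ := fun m => ∑ i, if y i = m then c i else 0
  have hdy : ∀ i, d (y i) = c i := fun i => by simp [d, hy.eq_iff]
  have hd : ∑ m, d m • simplexVertex n m = 0 := by
    simp only [d, sum_smul, ite_smul, zero_smul]
    rw [sum_comm]
    simpa [Matrix.vecMul, dotProduct, funext_iff, Finset.sum_apply, mul_comm] using hcM
  obtain ⟨m₀, hm₀⟩ := exists_notMem_range y
  have hdm₀ : d m₀ = 0 := sum_eq_zero fun i _ => if_neg fun h => hm₀ ⟨i, h⟩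
  exact hc (funext fun i => by
    rw [← hdy, eq_of_sum_smul_simplexVertex_eq_zero hd,
      ← eq_of_sum_smul_simplexVertex_eq_zero hd m₀, hdm₀, Pi.zero_apply])

theorem stdSphereDet_of_not_injective {y : Fin (n + 1) → Fin (n + 2)}
    (hy : ¬ Function.Injective y) : stdSphereDet y = 0 := by
  simp only [Function.Injective, not_forall] at hy
  obtain ⟨i, j, hij, hne⟩ := hy
  exact Matrix.det_zero_of_row_eq hne (funext fun k => by simp [hij])

theorem stdSphereDet_comp_perm (y : Fin (n + 1) → Fin (n + 2)) (σ : Equiv.Perm (Fin (n + 1))) :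
    stdSphereDet (y ∘ σ) = Equiv.Perm.sign σ * stdSphereDet y :=
  Matrix.det_permute σ (Matrix.of fun i => simplexVertex n (y i))

/-- The missing vertex is minus the sum of the others. -/
theorem stdSphereDet_update {x : Fin (n + 1) → Fin (n + 2)} (hx : Function.Injective x)
    {b : Fin (n + 2)} (hb : b ∉ Set.range x) (i : Fin (n + 1)) :
    stdSphereDet (Function.update x i b) = -stdSphereDet x := by
  have huniv : insert b (univ.image x) = univ :=
    eq_of_subset_of_card_le (subset_univ _) (by
      rw [card_insert_of_notMem (by simpa using hb), card_image_of_injective _ hx]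
      simp)
  have hb' : simplexVertex n b = ∑ j, (-1 : ℤ) • simplexVertex n (x j) := by
    have := sum_simplexVertex (n := n)
    rw [← huniv, sum_insert (by simpa using hb), sum_image fun _ _ _ _ h => hx h] at this
    simp only [neg_smul, one_smul, sum_neg_distrib]
    exact eq_neg_of_add_eq_zero_left this
  have hrows : (Matrix.of fun j => simplexVertex n (Function.update x i b j)) =
      (Matrix.of fun j => simplexVertex n (x j)).updateRow i (simplexVertex n b) := by
    ext j k
    by_cases hji : j = i <;> simp [Matrix.updateRow_apply, Function.update_apply, hji]
  rw [stdSphereDet, hrows, hb']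
  exact (Matrix.det_updateRow_sum _ i fun _ => -1).trans (neg_one_mul _)

theorem sign_stdSphereDet_eq_one_or {y : Fin (n + 1) → Fin (n + 2)} (hy : Function.Injective y) :
    (stdSphereDet y).sign = 1 ∨ (stdSphereDet y).sign = -1 := by
  rcases (stdSphereDet_ne_zero hy).lt_or_gt with h | h
  · exact Or.inr (Int.sign_eq_neg_one_of_neg h)
  · exact Or.inl (Int.sign_eq_one_of_pos h)

def stdSphereOrientation (n : ℕ) : CoherentOrientation n (stdSphere n) where
  sign y := (stdSphereDet y).sign
  sign_perm x σ := by
    rw [stdSphereDet_comp_perm, Int.sign_mul]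
    rcases Int.units_eq_one_or (Equiv.Perm.sign σ) with h | h <;> simp [h]
  sign_unit y hy _ := sign_stdSphereDet_eq_one_or hy
  sign_zero y := by
    rintro (hy | hy)
    · rw [stdSphereDet_of_not_injective hy, Int.sign_zero]
    · refine absurd ⟨univ_nonempty.image y, fun h => ?_⟩ hy
      have := (congrArg card h).symm.trans_le card_image_le
      simp at this
  coherent x y := by
    rintro ⟨i, hne, hxy⟩ hx hy
    have hinj : ∀ {z : Fin (n + 1) → Fin (n + 2)}, (stdSphereDet z).sign ≠ 0 →
        Function.Injective z := fun hz => by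
      by_contra h
      simp [stdSphereDet_of_not_injective h] at hz
    rw [Function.eq_update_iff.mpr ⟨rfl, fun j hj => (hxy j hj).symm⟩,
      stdSphereDet_update (hinj hx) (Function.apply_notMem_range_of_forall_ne_eq (hinj hy) hne hxy),
      Int.sign_neg]

end StdSphereOrientation

end AbsCx

open AbsCx

/-! `unprimed n k` and `primed n k` are the paper's `u_{k+1}` and `u'_{k+1}`; `fold n` sends
both to the vertex `k` of `stdSphere n`. A facet of the complex is a lift `facet m P` of a facet
`univ.erase m` of `stdSphere n`, primed exactly on the labels in `P`. -/

namespace FoldSphere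

variable {n : ℕ}

def unprimed (n : ℕ) (l : Fin (n + 2)) : Fin (2 * n + 4) := ⟨l, by omega⟩

def primed (n : ℕ) (l : Fin (n + 2)) : Fin (2 * n + 4) := ⟨n + 2 + l, by omega⟩

def fold (n : ℕ) (v : Fin (2 * n + 4)) : Fin (n + 2) :=
  ⟨if (v : ℕ) < n + 2 then v else v - (n + 2), by split_ifs <;> omega⟩

@[simp] theorem fold_unprimed (l : Fin (n + 2)) : fold n (unprimed n l) = l := by
  ext; simp [fold, unprimed]

@[simp] theorem fold_primed (l : Fin (n + 2)) : fold n (primed n l) = l := by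
  ext; simp [fold, primed]

theorem unprimed_injective : Function.Injective (unprimed n) := fun _ _ h => by
  simpa [unprimed, Fin.ext_iff] using h

theorem primed_injective : Function.Injective (primed n) := fun _ _ h => by
  simpa [primed, Fin.ext_iff] using h

@[simp] theorem primed_ne_unprimed (l l' : Fin (n + 2)) : primed n l ≠ unprimed n l' := by
  simp only [primed, unprimed, ne_eq, Fin.ext_iff]
  omega

@[simp] theorem unprimed_ne_primed (l l' : Fin (n + 2)) : unprimed n l ≠ primed n l' :=
  (primed_ne_unprimed l' l).symm

theorem eq_unprimed_or_eq_primed (v : Fin (2 * n + 4)) :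
    v = unprimed n (fold n v) ∨ v = primed n (fold n v) := by
  by_cases hv : (v : ℕ) < n + 2
  · left; ext; simp [unprimed, fold, hv]
  · right; ext; simp only [primed, fold, hv, ↓reduceIte]; omega

def lift (P : Finset (Fin (n + 2))) (l : Fin (n + 2)) : Fin (2 * n + 4) :=
  if l ∈ P then primed n l else unprimed n l

@[simp] theorem fold_lift (P : Finset (Fin (n + 2))) (l : Fin (n + 2)) :
    fold n (lift P l) = l := by
  unfold lift; split_ifs <;> simp

@[simp] theorem lift_empty : lift (∅ : Finset (Fin (n + 2))) = unprimed n := by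
  funext l
  simp [lift]

theorem lift_injective (P : Finset (Fin (n + 2))) : Function.Injective (lift P) :=
  Function.LeftInverse.injective (fold_lift P)

def facet (m : Fin (n + 2)) (P : Finset (Fin (n + 2))) : Finset (Fin (2 * n + 4)) :=
  (univ.erase m).image (lift P)

variable {m : Fin (n + 2)} {P : Finset (Fin (n + 2))}

theorem mem_facet {v : Fin (2 * n + 4)} : v ∈ facet m P ↔ fold n v ≠ m ∧ lift P (fold n v) = v := by
  simp only [facet, mem_image, mem_erase, mem_univ, and_true]
  constructor
  · rintro ⟨l, hl, rfl⟩; simpa using hl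
  · rintro ⟨hv, hlift⟩; exact ⟨_, hv, hlift⟩

theorem unprimed_mem_facet {l : Fin (n + 2)} : unprimed n l ∈ facet m P ↔ l ≠ m ∧ l ∉ P := by
  simp [mem_facet, lift]

theorem primed_mem_facet {l : Fin (n + 2)} : primed n l ∈ facet m P ↔ l ≠ m ∧ l ∈ P := by
  simp [mem_facet, lift]

@[simp] theorem image_fold_facet : (facet m P).image (fold n) = univ.erase m := by
  simp [facet, image_image, Function.comp_def]

theorem injOn_fold_facet : Set.InjOn (fold n) (facet m P) := by
  intro v hv v' hv' h
  rw [← (mem_facet.mp hv).2, ← (mem_facet.mp hv').2, h]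

theorem card_facet : (facet m P).card = n + 1 := by
  simp [facet, card_image_of_injective _ (lift_injective P)]

theorem facet_inj {m' : Fin (n + 2)} {P' : Finset (Fin (n + 2))} (hm : m ∉ P) (hm' : m' ∉ P')
    (h : facet m P = facet m' P') : m = m' ∧ P = P' := by
  have hmm' : m = m' := by
    have := congrArg (image (fold n)) h
    rwa [image_fold_facet, image_fold_facet, erase_inj _ (mem_univ m)] at this
  subst hmm'
  refine ⟨rfl, ext fun l => ?_⟩
  have := congrArg (primed n l ∈ ·) h
  simp only [primed_mem_facet, eq_iff_iff] at this
  by_cases hl : l = m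
  · simp [hl, hm, hm']
  · simpa [hl] using this

theorem insert_primed_erase_facet {b : Fin (n + 2)} (hbm : b ≠ m) (hm : m ∉ P) :
    insert (primed n m) ((facet m P).erase (lift P b)) = facet b (insert m (P.erase b)) := by
  ext v
  rcases eq_unprimed_or_eq_primed v with h | h <;> rw [h] <;> generalize fold n v = l <;>
    clear h <;> by_cases hb : b ∈ P <;> by_cases hlb : l = b <;> by_cases hlm : l = m <;>
    simp_all [unprimed_mem_facet, primed_mem_facet, lift, unprimed_injective.eq_iff,
      primed_injective.eq_iff]

theorem card_filter_primed_facet (hm : m ∉ P) :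
    ((facet m P).filter fun v : Fin (2 * n + 4) => n + 2 ≤ (v : ℕ)).card = P.card := by
  rw [← card_image_of_injective P primed_injective]
  congr 1
  ext v
  rcases eq_unprimed_or_eq_primed v with h | h <;> rw [h] <;> generalize fold n v = l
  · simp only [mem_filter, mem_image, primed_ne_unprimed, and_false, exists_false, iff_false,
      not_and, not_le]
    exact fun _ => by simp [unprimed]
  · simp only [mem_filter, primed_mem_facet, mem_image, primed_injective.eq_iff, exists_eq_right]
    exact ⟨fun h => h.1.2, fun h => ⟨⟨fun hlm => hm (hlm ▸ h), h⟩, by simp [primed]⟩⟩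

def primedLabels (m : Fin (n + 2)) (i : Fin (n + 1)) : Finset (Fin (n + 2)) :=
  if m = Fin.last _ then {i.castSucc} else if i.castSucc = m then ∅ else {i.castSucc, Fin.last _}

theorem notMem_primedLabels (m : Fin (n + 2)) (i : Fin (n + 1)) : m ∉ primedLabels m i := by
  unfold primedLabels
  split_ifs with h1 h2 <;> simp_all [eq_comm, Fin.castSucc_ne_last]

theorem primedLabels_injective (m : Fin (n + 2)) : Function.Injective (primedLabels m) := by
  intro i i' h
  unfold primedLabels at h
  split_ifs at h with h1 h2 h3 h3
  · simpa using h
  · exact Fin.castSucc_injective _ (h2.trans h3.symm)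
  · exact absurd h.symm (insert_ne_empty _ _)
  · exact absurd h (insert_ne_empty _ _)
  · exact Fin.castSucc_injective _ ((insert_inj (by simp [Fin.castSucc_ne_last])).mp h)

theorem even_card_primedLabels_iff (m : Fin (n + 2)) (i : Fin (n + 1)) :
    Even (primedLabels m i).card ↔ m ≠ Fin.last _ := by
  unfold primedLabels
  split_ifs with h1 h2 <;> simp [h1, Fin.castSucc_ne_last]

theorem mem_primedLabels {m l : Fin (n + 2)} {i : Fin (n + 1)} (h : l ∈ primedLabels m i) :
    l = i.castSucc ∨ l = Fin.last _ := by
  unfold primedLabels at h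
  split_ifs at h <;> simp_all

theorem primedLabels_ne_singleton_last (m : Fin (n + 2)) (i : Fin (n + 1)) :
    primedLabels m i ≠ {Fin.last _} := by
  unfold primedLabels
  split_ifs <;> simp [Fin.castSucc_ne_last, Finset.ext_iff]

theorem primedLabels_eq_insert_erase {m : Fin (n + 2)} {i : Fin (n + 1)} (hm : m ≠ i.castSucc) :
    primedLabels m i = insert i.castSucc (({Fin.last _} : Finset (Fin (n + 2))).erase m) := by
  unfold primedLabels
  split_ifs with h1 h2
  · simp [h1]
  · exact absurd h2.symm hm
  · rw [erase_eq_of_notMem (by simpa using h1)]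

theorem primedLabels_castSucc_self (i : Fin (n + 1)) : primedLabels i.castSucc i = ∅ := by
  simp [primedLabels, Fin.castSucc_ne_last]

/-- The facets over the facet `univ.erase m` of `stdSphere n`, indexed by `i`. With `Δ` the
simplex on the unprimed vertices other than `last`, these are: for `m = last`, the cone from
`primed n i` over the facet of `Δ` opposite `i`; for `i = m`, the cone from `unprimed n last`
over the facet of `Δ` opposite `m`; otherwise the cone from `primed n last` over the join of
`primed n i` and the face of `Δ` opposite `i` and `m`. -/
def facetK (p : Fin (n + 2) × Fin (n + 1)) : Finset (Fin (2 * n + 4)) :=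
  facet p.1 (primedLabels p.1 p.2)

def facetsK (n : ℕ) : Finset (Finset (Fin (2 * n + 4))) :=
  univ.image facetK

theorem facetK_injective : Function.Injective (facetK (n := n)) := by
  rintro ⟨m, i⟩ ⟨m', i'⟩ h
  obtain ⟨rfl, hP⟩ := facet_inj (notMem_primedLabels m i) (notMem_primedLabels m' i') h
  rw [primedLabels_injective m hP]

theorem card_facetsK : (facetsK n).card = (n + 1) * (n + 2) := by
  rw [facetsK, card_image_of_injective _ facetK_injective, card_univ, Fintype.card_prod,
    Fintype.card_fin, Fintype.card_fin, mul_comm]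

theorem card_of_mem_facetsK {T : Finset (Fin (2 * n + 4))} (hT : T ∈ facetsK n) :
    T.card = n + 1 := by
  obtain ⟨p, -, rfl⟩ := mem_image.mp hT
  exact card_facet

theorem facetK_mem_facetsK (p : Fin (n + 2) × Fin (n + 1)) : facetK p ∈ facetsK n :=
  mem_image_of_mem _ (mem_univ p)

theorem injOn_fold_of_mem_faces {s : Finset (Fin (2 * n + 4))}
    (hs : s ∈ (ofFacets (facetsK n)).faces) : Set.InjOn (fold n) s := by
  obtain ⟨-, T, hT, hsT⟩ := hs
  obtain ⟨p, -, rfl⟩ := mem_image.mp hT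
  exact injOn_fold_facet.mono hsT

theorem isSimplicialMap_fold : (ofFacets (facetsK n)).IsSimplicialMap (stdSphere n) (fold n) := by
  rintro s ⟨hs, T, hT, hsT⟩
  obtain ⟨⟨m, i⟩, -, rfl⟩ := mem_image.mp hT
  refine ⟨hs.image _, fun huniv => ?_⟩
  have hm := image_subset_image (f := fold n) hsT (huniv ▸ mem_univ m)
  rw [facetK, image_fold_facet] at hm
  simp at hm

theorem vertexSet_ofFacets_facetsK (hn : 1 ≤ n) : (ofFacets (facetsK n)).vertexSet = Set.univ := by
  have : Nontrivial (Fin (n + 1)) := Fin.nontrivial_iff_two_le.mpr (by omega)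
  refine Set.eq_univ_of_forall fun v => ?_
  suffices ∃ p, v ∈ facetK p from
    let ⟨p, hp⟩ := this
    ⟨singleton_nonempty v, _, facetK_mem_facetsK p, singleton_subset_iff.mpr hp⟩
  rcases eq_unprimed_or_eq_primed v with h | h <;> rw [h] <;> generalize fold n v = l
  · obtain ⟨i, hi⟩ : ∃ i : Fin (n + 1), i.castSucc ≠ l := by
      rcases Fin.eq_castSucc_or_eq_last l with ⟨j, rfl⟩ | rfl
      · obtain ⟨i, hi⟩ := exists_ne j
        exact ⟨i, fun h => hi (Fin.castSucc_injective _ h)⟩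
      · exact ⟨0, Fin.castSucc_ne_last 0⟩
    refine ⟨(i.castSucc, i), unprimed_mem_facet.mpr ⟨hi.symm, ?_⟩⟩
    simp [primedLabels, Fin.castSucc_ne_last]
  · rcases Fin.eq_castSucc_or_eq_last l with ⟨i, rfl⟩ | rfl
    · exact ⟨(Fin.last _, i), primed_mem_facet.mpr
        ⟨Fin.castSucc_ne_last i, by simp [primedLabels]⟩⟩
    · obtain ⟨i, hi⟩ := exists_ne (0 : Fin (n + 1))
      refine ⟨((0 : Fin (n + 1)).castSucc, i), primed_mem_facet.mpr
        ⟨(Fin.castSucc_ne_last 0).symm, ?_⟩⟩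
      simp [primedLabels, hi]

open scoped Classical in
theorem card_faces_image_fold_eq (m : Fin (n + 2)) :
    #{T : Finset (Fin (2 * n + 4)) | T ∈ (ofFacets (facetsK n)).faces ∧
      T.image (fold n) = univ.erase m} = n + 1 := by
  have hfiber : (univ.filter fun T : Finset (Fin (2 * n + 4)) =>
      T ∈ (ofFacets (facetsK n)).faces ∧ T.image (fold n) = univ.erase m) =
      univ.image fun i => facetK (m, i) := by
    ext T
    simp only [mem_filter, mem_univ, true_and, mem_image]
    constructor
    · rintro ⟨hT, himage⟩
      have hcard : n + 1 ≤ T.card := by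
        simpa [himage] using card_image_le (s := T) (f := fold n)
      obtain ⟨⟨m', i⟩, -, rfl⟩ := mem_image.mp
        (mem_of_mem_ofFacets_faces (fun _ => card_of_mem_facetsK) hT hcard)
      rw [facetK, image_fold_facet, erase_inj _ (mem_univ m')] at himage
      exact ⟨i, himage ▸ rfl⟩
    · rintro ⟨i, rfl⟩
      exact ⟨⟨card_pos.mp (by rw [facetK, card_facet]; omega), _, facetK_mem_facetsK (m, i),
        subset_rfl⟩, image_fold_facet⟩
  rw [hfiber, card_image_of_injective _ fun i i' h => (Prod.ext_iff.mp (facetK_injective h)).2,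
    card_univ, Fintype.card_fin]

theorem even_card_filter_primed_facetK (p : Fin (n + 2) × Fin (n + 1)) :
    Even ((facetK p).filter fun v : Fin (2 * n + 4) => n + 2 ≤ (v : ℕ)).card ↔
      p.1 ≠ Fin.last _ := by
  rw [facetK, card_filter_primed_facet (notMem_primedLabels _ _), even_card_primedLabels_iff]

/-- Swapping a vertex of a facet for the other lift of its label changes the number of primed
vertices by one, while the parity of that number is determined by the label a facet misses. -/
theorem fold_ne_of_insert_erase_mem {s : Finset (Fin (2 * n + 4))}
    (hs : s ∈ (ofFacets (facetsK n)).faces) (hcard : s.card = n + 1) {a b : Fin (2 * n + 4)}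
    (ha : a ∈ s) (hb : b ∉ s) (hab : insert b (s.erase a) ∈ (ofFacets (facetsK n)).faces) :
    fold n b ≠ fold n a := by
  intro hfold
  have hpure : ∀ T ∈ facetsK n, T.card = n + 1 := fun _ => card_of_mem_facetsK
  obtain ⟨⟨m, i⟩, -, rfl⟩ := mem_image.mp (mem_of_mem_ofFacets_faces hpure hs hcard.ge)
  obtain ⟨⟨m', i'⟩, -, hm'⟩ := mem_image.mp (mem_of_mem_ofFacets_faces hpure hab (by
    rw [card_insert_of_notMem fun h => hb (mem_of_mem_erase h), card_erase_of_mem ha, hcard]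
    omega))
  have hmm' : m' = m := by
    have himage := congrArg (image (fold n)) hm'
    rwa [image_insert, hfold, ← image_insert, insert_erase ha, facetK, facetK, image_fold_facet,
      image_fold_facet, erase_inj _ (mem_univ m')] at himage
  subst hmm'
  have hparity := (even_card_filter_primed_facetK (m', i)).trans
    (even_card_filter_primed_facetK (m', i')).symm
  rw [hm', filter_insert, filter_erase] at hparity
  have hprimed : n + 2 ≤ (a : ℕ) ↔ ¬ n + 2 ≤ (b : ℕ) := by
    have hne : (a : ℕ) ≠ b := fun h => hb (Fin.ext h ▸ ha)
    have := congrArg Fin.val hfold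
    simp only [fold] at this
    split_ifs at this <;> omega
  by_cases hpb : n + 2 ≤ (b : ℕ)
  · rw [if_pos hpb, erase_eq_of_notMem (by simp [hprimed, hpb]),
      card_insert_of_notMem (by simp [hb]), Nat.even_add_one] at hparity
    exact (iff_not_self hparity).elim
  · rw [if_neg hpb, ← card_erase_add_one (mem_filter.mpr ⟨ha, hprimed.mpr hpb⟩),
      Nat.even_add_one] at hparity
    exact (iff_not_self hparity.symm).elim

theorem mem_stellarFacets_facet {F : Finset (Finset (Fin (2 * n + 4)))} (hm : m ∉ P)
    {T : Finset (Fin (2 * n + 4))} :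
    T ∈ stellarFacets F (facet m P) (primed n m) ↔
      (T ∈ F ∧ T ≠ facet m P) ∨ ∃ b ≠ m, T = facet b (insert m (P.erase b)) := by
  rw [mem_stellarFacets]
  refine or_congr_right ⟨?_, ?_⟩
  · rintro ⟨u, hu, rfl⟩
    obtain ⟨b, hb, rfl⟩ := mem_image.mp hu
    exact ⟨b, (mem_erase.mp hb).1, insert_primed_erase_facet (mem_erase.mp hb).1 hm⟩
  · rintro ⟨b, hb, rfl⟩
    exact ⟨lift P b, mem_image_of_mem _ (mem_erase.mpr ⟨hb, mem_univ b⟩),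
      (insert_primed_erase_facet hb hm).symm⟩

/-- The complex obtained from the boundary of the simplex on the unprimed vertices by
subdividing `facet last ∅` with `primed n last` and then `facet j {last}` with `primed n j`
for `j < k`. -/
def stageFacets (n k : ℕ) : Finset (Finset (Fin (2 * n + 4))) :=
  (univ.filter fun p : Fin (n + 2) × Fin (n + 1) => (p.2 : ℕ) < k ∨ p.2.castSucc = p.1).image
      facetK ∪
    (univ.filter fun j : Fin (n + 1) => k ≤ (j : ℕ)).image fun j => facet j.castSucc {Fin.last _}

theorem mem_stageFacets {k : ℕ} {T : Finset (Fin (2 * n + 4))} :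
    T ∈ stageFacets n k ↔ (∃ p : Fin (n + 2) × Fin (n + 1), ((p.2 : ℕ) < k ∨ p.2.castSucc = p.1) ∧
      facetK p = T) ∨ ∃ j : Fin (n + 1), k ≤ (j : ℕ) ∧ facet j.castSucc {Fin.last _} = T := by
  simp [stageFacets]

theorem stageFacets_last : stageFacets n (n + 1) = facetsK n := by
  ext T
  simp [mem_stageFacets, facetsK, Fin.is_le, Nat.not_le.mpr (Fin.is_lt _)]

theorem facetK_ne_facet_last (p : Fin (n + 2) × Fin (n + 1)) (j : Fin (n + 1)) :
    facetK p ≠ facet j.castSucc {Fin.last _} := fun h =>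
  primedLabels_ne_singleton_last p.1 p.2
    (facet_inj (notMem_primedLabels _ _) (by simp [Fin.castSucc_ne_last]) h).2

theorem stellarFacets_stageFacets {k : ℕ} (hk : k < n + 1) :
    stellarFacets (stageFacets n k) (facet (Fin.castSucc ⟨k, hk⟩) {Fin.last _})
      (primed n (Fin.castSucc ⟨k, hk⟩)) = stageFacets n (k + 1) := by
  set j : Fin (n + 1) := ⟨k, hk⟩
  have hjP : j.castSucc ∉ ({Fin.last _} : Finset (Fin (n + 2))) := by simp [Fin.castSucc_ne_last]
  ext T
  rw [mem_stellarFacets_facet hjP, mem_stageFacets, mem_stageFacets]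
  constructor
  · rintro (⟨⟨p, hp, rfl⟩ | ⟨j', hj', rfl⟩, hne⟩ | ⟨b, hb, rfl⟩)
    · exact Or.inl ⟨p, hp.imp_left (·.trans (Nat.lt_succ_self k)), rfl⟩
    · refine Or.inr ⟨j', lt_of_le_of_ne hj' fun h => hne ?_, rfl⟩
      rw [show j' = j from Fin.ext h.symm]
    · exact Or.inl ⟨(b, j), Or.inl (Nat.lt_succ_self k), by
        rw [facetK, primedLabels_eq_insert_erase hb]⟩
  · rintro (⟨p, hp, rfl⟩ | ⟨j', hj', rfl⟩)
    · by_cases hpj : (p.2 : ℕ) < k ∨ p.2.castSucc = p.1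
      · exact Or.inl ⟨Or.inl ⟨p, hpj, rfl⟩, facetK_ne_facet_last p j⟩
      · have hp2 : p.2 = j := by
          have h1 := hp.resolve_right fun h => hpj (Or.inr h)
          have h2 : ¬ (p.2 : ℕ) < k := fun h => hpj (Or.inl h)
          exact Fin.ext (by simp only [j]; omega)
        refine Or.inr ⟨p.1, fun h => hpj (Or.inr (hp2 ▸ h.symm)), ?_⟩
        rw [facetK, ← hp2, primedLabels_eq_insert_erase fun h => hpj (Or.inr h.symm)]
    · refine Or.inl ⟨Or.inr ⟨j', by omega, rfl⟩, fun h => ?_⟩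
      have := congrArg Fin.val
        (Fin.castSucc_injective _ (facet_inj (by simp [Fin.castSucc_ne_last]) hjP h).1)
      simp only [j] at this
      omega

def unprimedEmb (n : ℕ) : Fin (n + 2) ↪ Fin (2 * n + 4) := ⟨unprimed n, unprimed_injective⟩

theorem simplexBoundaryFacets_unprimedEmb :
    simplexBoundaryFacets (unprimedEmb n) = univ.image fun m => facet m ∅ := by
  simp [simplexBoundaryFacets, facet, map_eq_image, unprimedEmb]

theorem stellarFacets_simplexBoundary :
    stellarFacets (simplexBoundaryFacets (unprimedEmb n)) (facet (Fin.last _) ∅)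
      (primed n (Fin.last _)) = stageFacets n 0 := by
  ext T
  rw [simplexBoundaryFacets_unprimedEmb, mem_stellarFacets_facet (notMem_empty _),
    mem_stageFacets]
  constructor
  · rintro (⟨hT, hne⟩ | ⟨b, hb, rfl⟩)
    · obtain ⟨m, -, rfl⟩ := mem_image.mp hT
      obtain ⟨i, rfl⟩ := Fin.exists_castSucc_eq.mpr fun h => hne (h ▸ rfl)
      exact Or.inl ⟨(i.castSucc, i), Or.inr rfl, by rw [facetK, primedLabels_castSucc_self]⟩
    · obtain ⟨j, rfl⟩ := Fin.exists_castSucc_eq.mpr hb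
      exact Or.inr ⟨j, Nat.zero_le _, by simp⟩
  · rintro (⟨⟨m, i⟩, hp, rfl⟩ | ⟨j, -, rfl⟩)
    · obtain rfl : i.castSucc = m := hp.resolve_left (Nat.not_lt_zero _)
      rw [facetK, primedLabels_castSucc_self]
      refine Or.inl ⟨mem_image_of_mem _ (mem_univ _), fun h => Fin.castSucc_ne_last i ?_⟩
      exact (facet_inj (notMem_empty _) (notMem_empty _) h).1
    · exact Or.inr ⟨j.castSucc, Fin.castSucc_ne_last j, by simp⟩

theorem card_of_mem_stageFacets {k : ℕ} {T : Finset (Fin (2 * n + 4))}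
    (hT : T ∈ stageFacets n k) : T.card = n + 1 := by
  rcases mem_stageFacets.mp hT with ⟨p, -, rfl⟩ | ⟨j, -, rfl⟩ <;> exact card_facet

theorem primed_notMem_of_mem_stageFacets {k : ℕ} (hk : k < n + 1) {T : Finset (Fin (2 * n + 4))}
    (hT : T ∈ stageFacets n k) : primed n (Fin.castSucc ⟨k, hk⟩) ∉ T := by
  rcases mem_stageFacets.mp hT with ⟨⟨m, i⟩, hp, rfl⟩ | ⟨j, -, rfl⟩
  · rw [facetK, primed_mem_facet]
    rintro ⟨hne, hmem⟩
    rcases mem_primedLabels hmem with h | h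
    · obtain rfl := Fin.castSucc_injective _ h
      exact hp.elim (lt_irrefl _) fun h' => hne h'
    · exact Fin.castSucc_ne_last _ h
  · rw [primed_mem_facet, mem_singleton]
    exact fun h => Fin.castSucc_ne_last _ h.2

theorem nonempty_homeomorph_realization_stageFacets_succ {k : ℕ} (hk : k < n + 1) :
    Nonempty ((ofFacets (stageFacets n (k + 1))).realization ≃ₜ
      (ofFacets (stageFacets n k)).realization) := by
  rw [← stellarFacets_stageFacets hk]
  refine nonempty_homeomorph_realization_stellarFacets
    (fun T hT => primed_notMem_of_mem_stageFacets hk hT) (fun T hT hST => (eq_of_subset_of_card_le hST ?_).symm) (card_pos.mp ?_) ?_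
  · rw [card_of_mem_stageFacets hT, card_facet]
  · rw [card_facet]; omega
  · exact mem_stageFacets.mpr (Or.inr ⟨⟨k, hk⟩, le_rfl, rfl⟩)

theorem nonempty_homeomorph_realization_stageFacets_zero :
    Nonempty ((ofFacets (stageFacets n 0)).realization ≃ₜ
      (ofFacets (simplexBoundaryFacets (unprimedEmb n))).realization) := by
  rw [← stellarFacets_simplexBoundary, simplexBoundaryFacets_unprimedEmb]
  refine nonempty_homeomorph_realization_stellarFacets (fun T hT => ?_)
    (fun T hT hST => (eq_of_subset_of_card_le hST ?_).symm) (card_pos.mp ?_)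
    (mem_image_of_mem _ (mem_univ _))
  · obtain ⟨m, -, rfl⟩ := mem_image.mp hT
    simp [primed_mem_facet]
  · obtain ⟨m, -, rfl⟩ := mem_image.mp hT
    rw [card_facet, card_facet]
  · rw [card_facet]; omega

theorem isSphereTriangulation_ofFacets_facetsK :
    (ofFacets (facetsK n)).IsSphereTriangulation n := by
  have hstages : ∀ k ≤ n + 1, Nonempty ((ofFacets (stageFacets n k)).realization ≃ₜ
      Metric.sphere (0 : EuclideanSpace ℝ (Fin (n + 1))) 1) := by
    intro k hk
    induction k with
    | zero =>
      obtain ⟨e₁⟩ := nonempty_homeomorph_realization_stageFacets_zero (n := n)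
      obtain ⟨e₂⟩ := nonempty_homeomorph_realization_simplexBoundary (e := unprimedEmb n)
      exact ⟨e₁.trans e₂⟩
    | succ k ih =>
      obtain ⟨e₁⟩ := nonempty_homeomorph_realization_stageFacets_succ (n := n)
        (by omega : k < n + 1)
      obtain ⟨e₂⟩ := ih (by omega)
      exact ⟨e₁.trans e₂⟩
  rw [← stageFacets_last]
  exact hstages (n + 1) le_rfl

end FoldSphere

open FoldSphere in
/-- For every `n ≥ 2` there is a triangulated `n`-sphere with `2n + 4` vertices and
exactly `(n+1)(n+2)` facets admitting a simplicial degree `n+1` map to `S^n_{n+2}`. -/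
theorem stmt11 (n : ℕ) (hn : 2 ≤ n) :
    ∃ K : AbsCx (Fin (2 * n + 4)),
      K.vertexSet = Set.univ ∧ K.IsSphereTriangulation n ∧
      Set.ncard (K.facetsOfDim n) = (n + 1) * (n + 2) ∧
      ∃ (oK : CoherentOrientation n K) (oL : CoherentOrientation n (stdSphere n))
        (f : Fin (2 * n + 4) → Fin (n + 2)),
        K.IsSimplicialMap (stdSphere n) f ∧ HasDegree oK oL f ((n : ℤ) + 1) := by
  have hdeg := hasDegree_comap (stdSphereOrientation n) isSimplicialMap_fold
    (fun _ => injOn_fold_of_mem_faces) (fun _ hs hcard _ ha _ hb hab =>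
      fold_ne_of_insert_erase_mem hs hcard ha hb hab) (d := n + 1) fun y hy _ => by
    obtain ⟨m, hm⟩ := exists_image_eq_erase hy
    rw [hm, card_faces_image_fold_eq]
  push_cast at hdeg
  refine ⟨ofFacets (facetsK n), vertexSet_ofFacets_facetsK (by omega),
    isSphereTriangulation_ofFacets_facetsK, ?_, _, _, fold n, isSimplicialMap_fold, hdeg⟩
  rw [facetsOfDim_ofFacets fun _ => card_of_mem_facetsK, Set.ncard_coe_finset, card_facetsK]
end

section
/- If K is a triangulated n-sphere admitting a simplicial map of degree 2 to S^n_{n+2}, then K has at least n + 5 vertices. -/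
open Finset

open AbsCx

/-!
A facet `y` of `S^n_{n+2}` all of whose vertices but one have a single preimage vertex
has preimages differing pairwise in exactly one vertex, so by coherence any two of them
carry opposite signs. There are then at most two of them, of opposite signs, and the
algebraic count over `y` is `0` or `±1`. Degree `2` thus forces every facet, i.e. the
complement of every vertex `w`, to contain two vertices with at least two preimages each,
so at least three vertices of `S^n_{n+2}` have two or more preimages. Since every vertex
has a preimage, `K` has at least `(n + 2) + 3` vertices. For `n = 0` every facet has a
single vertex, so there is no map of degree `2` at all.
-/

theorem Finset.card_add_card_filter_one_lt_card_fiber_le {α β : Type*} [DecidableEq β]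
    {s : Finset α} {t : Finset β} {f : α → β} (hmaps : Set.MapsTo f s t)
    (hsurj : Set.SurjOn f s t) :
    #t + #{b ∈ t | 1 < #{a ∈ s | f a = b}} ≤ #s := by
  rw [card_eq_sum_card_fiberwise hmaps, card_filter, card_eq_sum_ones, ← sum_add_distrib]
  refine sum_le_sum fun b hb => ?_
  obtain ⟨a, ha, rfl⟩ := hsurj hb
  have : 0 < #{a' ∈ s | f a' = f a} := card_pos.mpr ⟨a, mem_filter.mpr ⟨ha, rfl⟩⟩
  split_ifs <;> omega

theorem Finset.abs_sum_le_one_of_pairwise_eq_neg {ι : Type*} {S : Finset ι} {s : ι → ℤ}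
    (hs : ∀ x ∈ S, s x = 1 ∨ s x = -1) (hneg : (S : Set ι).Pairwise fun x y => s y = -s x) :
    |∑ x ∈ S, s x| ≤ 1 := by
  classical
  obtain hcard | hcard | hcard | hcard : #S = 0 ∨ #S = 1 ∨ #S = 2 ∨ 2 < #S := by omega
  · simp [card_eq_zero.mp hcard]
  · obtain ⟨a, rfl⟩ := card_eq_one.mp hcard
    rcases hs a (mem_singleton_self a) with h | h <;> simp [h]
  · obtain ⟨a, b, hab, rfl⟩ := card_eq_two.mp hcard
    rw [sum_pair hab, hneg (by simp) (by simp) hab]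
    simp
  · obtain ⟨a, ha, b, hb, c, hc, hab, hac, hbc⟩ := two_lt_card.mp hcard
    have : s a = 0 := by linarith [hneg ha hb hab, hneg ha hc hac, hneg hb hc hbc]
    rcases hs a ha with h | h <;> omega

namespace AbsCx

variable {V W : Type*}

open scoped Classical in
noncomputable def vertexFinset [Fintype V] (K : AbsCx V) : Finset V := {v | v ∈ K.vertexSet}

noncomputable def vertexFiber [Fintype V] [DecidableEq W] (K : AbsCx V) (f : V → W) (w : W) :
    Finset V :=
  {v ∈ K.vertexFinset | f v = w}

noncomputable def multiCovered [Fintype V] [Fintype W] [DecidableEq W] (K : AbsCx V)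
    (f : V → W) : Finset W :=
  {w | 1 < #(K.vertexFiber f w)}

theorem ncard_vertexSet [Fintype V] (K : AbsCx V) : K.vertexSet.ncard = #K.vertexFinset := by
  rw [← Set.ncard_coe_finset]
  congr
  ext
  simp [vertexFinset]

theorem stdSphere_image_mem_faces {n : ℕ} (y : Fin (n + 1) → Fin (n + 2)) :
    image y univ ∈ (stdSphere n).faces := by
  refine ⟨univ_nonempty.image y, fun h => ?_⟩
  have := (card_image_le (s := univ) (f := y)).trans_eq (card_fin (n + 1))
  rw [h, card_fin] at this
  omega

namespace CoherentOrientation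

variable [DecidableEq V] {n : ℕ} {K : AbsCx V}

theorem image_mem_faces_of_sign_ne_zero (oK : CoherentOrientation n K) {x : Fin (n + 1) → V}
    (hx : oK.sign x ≠ 0) : image x univ ∈ K.faces :=
  by_contra fun h => hx (oK.sign_zero x (Or.inr h))

theorem sign_eq_one_or_neg_one (oK : CoherentOrientation n K) {x : Fin (n + 1) → V}
    (hx : oK.sign x ≠ 0) : oK.sign x = 1 ∨ oK.sign x = -1 :=
  oK.sign_unit x (by_contra fun h => hx (oK.sign_zero x (Or.inl h)))
    (oK.image_mem_faces_of_sign_ne_zero hx)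

theorem mem_vertexSet_of_sign_ne_zero (oK : CoherentOrientation n K) {x : Fin (n + 1) → V}
    (hx : oK.sign x ≠ 0) (i : Fin (n + 1)) : x i ∈ K.vertexSet :=
  K.down_closed (oK.image_mem_faces_of_sign_ne_zero hx)
    (singleton_subset_iff.mpr (mem_image_of_mem x (mem_univ i))) (singleton_nonempty _)

theorem mem_vertexFiber [Fintype V] [DecidableEq W] (oK : CoherentOrientation n K) {f : V → W}
    {x : Fin (n + 1) → V} {y : Fin (n + 1) → W} (hx : oK.sign x ≠ 0) (hfx : f ∘ x = y)
    (i : Fin (n + 1)) : x i ∈ K.vertexFiber f (y i) := by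
  simp [vertexFiber, vertexFinset, oK.mem_vertexSet_of_sign_ne_zero hx i, ← hfx]

theorem exists_sign_comp_perm_eq_one (oK : CoherentOrientation n K) (hn : 1 ≤ n)
    {x : Fin (n + 1) → V} (hinj : Function.Injective x) (hx : image x univ ∈ K.faces) :
    ∃ σ : Equiv.Perm (Fin (n + 1)), oK.sign (x ∘ σ) = 1 := by
  obtain ⟨k, rfl⟩ : ∃ k, n = k + 1 := ⟨n - 1, by omega⟩
  rcases oK.sign_unit x hinj hx with h | h
  · exact ⟨1, h⟩
  · refine ⟨Equiv.swap 0 1, ?_⟩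
    rw [oK.sign_perm, Equiv.Perm.sign_swap zero_ne_one, h]
    rfl

theorem algSum_eq_sum_filter [Fintype V] [DecidableEq W] (oK : CoherentOrientation n K)
    (f : V → W) (y : Fin (n + 1) → W) :
    algSum oK.sign f y = ∑ x with f ∘ x = y ∧ oK.sign x ≠ 0, oK.sign x := by
  rw [sum_filter, algSum]
  refine sum_congr rfl fun x _ => ?_
  by_cases hx : oK.sign x = 0 <;> simp [hx]

theorem vertexFiber_nonempty_of_algSum_ne_zero [Fintype V] [DecidableEq W]
    (oK : CoherentOrientation n K) {f : V → W} {y : Fin (n + 1) → W}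
    (h : algSum oK.sign f y ≠ 0) (i : Fin (n + 1)) : (K.vertexFiber f (y i)).Nonempty := by
  rw [oK.algSum_eq_sum_filter] at h
  obtain ⟨x, hx, -⟩ := exists_ne_zero_of_sum_ne_zero h
  obtain ⟨hfx, hsx⟩ := (mem_filter.mp hx).2
  exact ⟨x i, oK.mem_vertexFiber hsx hfx i⟩

theorem abs_algSum_le_one [Fintype V] [DecidableEq W] (oK : CoherentOrientation n K)
    (f : V → W) (y : Fin (n + 1) → W)
    (hy : {i | 1 < #(K.vertexFiber f (y i))}.Subsingleton) :
    |algSum oK.sign f y| ≤ 1 := by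
  rw [oK.algSum_eq_sum_filter]
  refine abs_sum_le_one_of_pairwise_eq_neg (fun x hx => ?_) fun x hx x' hx' hne => ?_
  · exact oK.sign_eq_one_or_neg_one (mem_filter.mp hx).2.2
  obtain ⟨hfx, hsx⟩ := (mem_filter.mp hx).2
  obtain ⟨hfx', hsx'⟩ := (mem_filter.mp hx').2
  have hmulti : ∀ j, x j ≠ x' j → 1 < #(K.vertexFiber f (y j)) := fun j hj =>
    one_lt_card.mpr ⟨x j, oK.mem_vertexFiber hsx hfx j, x' j, oK.mem_vertexFiber hsx' hfx' j, hj⟩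
  obtain ⟨i, hi⟩ := Function.ne_iff.mp hne
  refine oK.coherent x x' ⟨i, hi, fun j hji => ?_⟩ hsx hsx'
  by_contra hj
  exact hji (hy (hmulti j hj) (hmulti i hi))

end CoherentOrientation

theorem stdSphere_zero_exists_sign_eq_one (oL : CoherentOrientation 0 (stdSphere 0)) :
    ∃ y, oL.sign y = 1 := by
  have hunit (w : Fin 2) : oL.sign (fun _ => w) = 1 ∨ oL.sign (fun _ => w) = -1 :=
    oL.sign_unit _ (fun a b _ => Subsingleton.elim (α := Fin 1) a b) (stdSphere_image_mem_faces _)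
  rcases hunit 0 with h | h
  · exact ⟨_, h⟩
  · refine ⟨fun _ => 1, ?_⟩
    have hadj : ∃ i, (0 : Fin 2) ≠ 1 ∧ ∀ j, j ≠ i → (0 : Fin 2) = 1 :=
      ⟨(0 : Fin 1), by decide, fun j hj => absurd (Subsingleton.elim j 0) hj⟩
    rw [oL.coherent (fun _ => 0) (fun _ => 1) hadj (by simp [h])
      (by rcases hunit 1 with h' | h' <;> simp [h']), h]
    rfl

section DegreeTwo

variable {V : Type*} [Fintype V] [DecidableEq V] {n : ℕ} {K : AbsCx V}
  {oK : CoherentOrientation n K} {oL : CoherentOrientation n (stdSphere n)} {f : V → Fin (n + 2)}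

theorem not_hasDegree_two_of_dim_zero {oK : CoherentOrientation 0 K}
    {oL : CoherentOrientation 0 (stdSphere 0)} {f : V → Fin (0 + 2)} :
    ¬HasDegree oK oL f 2 := fun hdeg => by
  obtain ⟨y, hy⟩ := stdSphere_zero_exists_sign_eq_one oL
  have := oK.abs_algSum_le_one f y (Set.subsingleton_of_subsingleton (α := Fin 1))
  rw [hdeg y hy] at this
  norm_num at this

theorem HasDegree.vertexFiber_nonempty (hdeg : HasDegree oK oL f 2) (hn : 1 ≤ n)
    (u : Fin (n + 2)) : (K.vertexFiber f u).Nonempty := by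
  obtain ⟨w, hwu⟩ := exists_ne u
  obtain ⟨σ, hσ⟩ := oL.exists_sign_comp_perm_eq_one hn Fin.succAbove_right_injective
    (stdSphere_image_mem_faces w.succAbove)
  obtain ⟨k, rfl⟩ := Fin.exists_succAbove_eq hwu.symm
  have := oK.vertexFiber_nonempty_of_algSum_ne_zero (by rw [hdeg _ hσ]; norm_num) (σ.symm k)
  simpa using this

theorem HasDegree.nontrivial_multiCovered_erase (hdeg : HasDegree oK oL f 2) (hn : 1 ≤ n)
    (w : Fin (n + 2)) : ((K.multiCovered f).erase w).Nontrivial := by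
  obtain ⟨σ, hσ⟩ := oL.exists_sign_comp_perm_eq_one hn Fin.succAbove_right_injective
    (stdSphere_image_mem_faces w.succAbove)
  have hsum := oK.abs_algSum_le_one f (w.succAbove ∘ σ)
  rw [hdeg _ hσ] at hsum
  obtain ⟨i, hi, j, hj, hij⟩ : {i | 1 < #(K.vertexFiber f ((w.succAbove ∘ σ) i))}.Nontrivial :=
    Set.not_subsingleton_iff.mp fun h => by have := hsum h; norm_num at this
  refine ⟨w.succAbove (σ i), ?_, w.succAbove (σ j), ?_,
    (Fin.succAbove_right_injective.comp σ.injective).ne hij⟩ <;>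
    simp_all [multiCovered, Fin.succAbove_ne]

theorem HasDegree.three_le_card_multiCovered (hdeg : HasDegree oK oL f 2) (hn : 1 ≤ n) :
    3 ≤ #(K.multiCovered f) := by
  obtain ⟨a, ha, -⟩ := hdeg.nontrivial_multiCovered_erase hn 0
  have := one_lt_card_iff_nontrivial.mpr (hdeg.nontrivial_multiCovered_erase hn a)
  rw [card_erase_of_mem (mem_of_mem_erase ha)] at this
  omega

end DegreeTwo

end AbsCx

theorem stmt12_general {V : Type*} [Fintype V] [DecidableEq V] (n : ℕ) (K : AbsCx V)
    (oK : CoherentOrientation n K) (oL : CoherentOrientation n (stdSphere n))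
    (f : V → Fin (n + 2))
    (hdeg : HasDegree oK oL f 2) :
    n + 5 ≤ K.vertexSet.ncard := by
  rcases Nat.eq_zero_or_pos n with rfl | hn
  · exact absurd hdeg not_hasDegree_two_of_dim_zero
  have hcount : #(univ : Finset (Fin (n + 2))) + #(K.multiCovered f) ≤ #K.vertexFinset :=
    card_add_card_filter_one_lt_card_fiber_le (fun v _ => mem_coe.mpr (mem_univ (f v)))
      fun u _ => let ⟨v, hv⟩ := hdeg.vertexFiber_nonempty hn u; ⟨v, mem_filter.mp hv⟩
  have := hdeg.three_le_card_multiCovered hn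
  rw [card_univ, Fintype.card_fin] at hcount
  rw [K.ncard_vertexSet]
  omega

/-- A triangulated `n`-sphere admitting a simplicial degree `2` map to `S^n_{n+2}`
has at least `n + 5` vertices. -/
theorem stmt12 {V : Type*} [Fintype V] [DecidableEq V] (n : ℕ) (K : AbsCx V)
    (hK : K.IsSphereTriangulation n)
    (oK : CoherentOrientation n K) (oL : CoherentOrientation n (stdSphere n))
    (f : V → Fin (n + 2)) (hf : K.IsSimplicialMap (stdSphere n) f)
    (hdeg : HasDegree oK oL f 2) :
    n + 5 ≤ K.vertexSet.ncard :=
  stmt12_general n K oK oL f hdeg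
end

section
/- If two distinct n-simplices of a triangulated n-sphere K map to the same n-simplex of S^n_{n+2} under a simplicial map, preserving orientation (both counted positively), then they do not share an (n-1)-dimensional face. -/
open Finset

open AbsCx

/-- Two distinct facets of a triangulated `n`-sphere mapping onto the same facet of
`S^n_{n+2}`, both counted positively, cannot share an `(n-1)`-dimensional face. -/
theorem stmt16 {V : Type*} [Fintype V] [DecidableEq V] (n : ℕ) (K : AbsCx V)
    (hK : K.IsSphereTriangulation n)
    (oK : CoherentOrientation n K) (oL : CoherentOrientation n (stdSphere n))
    (f : V → Fin (n + 2)) (hf : K.IsSimplicialMap (stdSphere n) f)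
    (x₁ x₂ : Fin (n + 1) → V) (y : Fin (n + 1) → Fin (n + 2))
    (hy : oL.sign y = 1) (h₁ : f ∘ x₁ = y) (h₂ : f ∘ x₂ = y)
    (hs₁ : oK.sign x₁ = 1) (hs₂ : oK.sign x₂ = 1)
    (hne : Finset.image x₁ Finset.univ ≠ Finset.image x₂ Finset.univ) :
    ¬ ∃ e : Finset V, e.card = n ∧ e ⊆ Finset.image x₁ Finset.univ ∧
        e ⊆ Finset.image x₂ Finset.univ := by
  classical
  rintro ⟨e, hecard, he₁, he₂⟩
  -- injectivity of x₁, x₂, y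
  have hx₁ : Function.Injective x₁ := by
    by_contra h
    have := oK.sign_zero x₁ (Or.inl h)
    omega
  have hx₂ : Function.Injective x₂ := by
    by_contra h
    have := oK.sign_zero x₂ (Or.inl h)
    omega
  have hyinj : Function.Injective y := by
    by_contra h
    have := oL.sign_zero y (Or.inl h)
    omega
  -- every vertex of e is hit by x₁ and x₂ at the same index
  have key : ∀ v ∈ e, ∃ i, x₁ i = v ∧ x₂ i = v := by
    intro v hv
    obtain ⟨i, _, hi⟩ := Finset.mem_image.mp (he₁ hv)
    obtain ⟨j, _, hj⟩ := Finset.mem_image.mp (he₂ hv)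
    have : y i = y j := by
      have h1 := congrFun h₁ i
      have h2 := congrFun h₂ j
      simp only [Function.comp_apply] at h1 h2
      rw [← h1, ← h2, hi, hj]
    have hij : i = j := hyinj this
    exact ⟨i, hi, hij ▸ hj⟩
  -- the set of indices where they agree
  set A : Finset (Fin (n+1)) := Finset.univ.filter (fun i => x₁ i = x₂ i) with hA
  have heA : e ⊆ A.image x₁ := by
    intro v hv
    obtain ⟨i, h1, h2⟩ := key v hv
    exact Finset.mem_image.mpr ⟨i, by simp [hA, h1, h2], h1⟩
  have hAcard : n ≤ A.card := by
    calc n = e.card := hecard.symm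
    _ ≤ (A.image x₁).card := Finset.card_le_card heA
    _ ≤ A.card := Finset.card_image_le
  set D : Finset (Fin (n+1)) := Finset.univ.filter (fun i => x₁ i ≠ x₂ i) with hD
  have hDA : D.card + A.card = n + 1 := by
    have := Finset.card_filter_add_card_filter_not
      (s := (Finset.univ : Finset (Fin (n+1)))) (p := fun i => x₁ i ≠ x₂ i)
    simpa [hA, hD] using this
  have hDne : D.Nonempty := by
    rcases Finset.eq_empty_or_nonempty D with h | h
    · exfalso
      apply hne
      congr 1
      funext i
      by_contra hx
      exact Finset.eq_empty_iff_forall_notMem.mp h i (by simp [hD, hx])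
    · exact h
  have hDcard : D.card = 1 := by
    have : 1 ≤ D.card := Finset.card_pos.mpr hDne
    omega
  obtain ⟨i₀, hi₀⟩ := Finset.card_eq_one.mp hDcard
  have hdiff : ∃ i, x₁ i ≠ x₂ i ∧ ∀ j, j ≠ i → x₁ j = x₂ j := by
    refine ⟨i₀, ?_, ?_⟩
    · have : i₀ ∈ D := hi₀ ▸ Finset.mem_singleton_self i₀
      simpa [hD] using this
    · intro j hj
      by_contra hx
      have : j ∈ D := by simp [hD, hx]
      rw [hi₀, Finset.mem_singleton] at this
      exact hj this
  have := oK.coherent x₁ x₂ hdiff (by omega) (by omega)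
  omega
end
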